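/- For α ∈ (0,1] and a, b > 0, the function h(r) = (b/a)(1 - I₀^α(√a r)/I₀^α(√a)) satisfies h(1) = 0, h(0) = (b/a)(1 - 1/I₀^α(√a)) > 0, h'(0) = 0, and h is strictly decreasing on [0,1]. -/

import Mathlib

open Real Finset

noncomputable def fracBesselCoeff (α : ℝ) (n : ℕ) : ℝ :=
  (∏ i ∈ Finset.range n, Real.Gamma (2 * (i + 1) - α + 1) / Real.Gamma (2 * (i + 1))) /
    ((Nat.factorial n : ℝ) ^ 2 * 4 ^ n)

noncomputable def fracBesselI (α : ℝ) (x : ℝ) : ℝ :=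
  ∑' n : ℕ, fracBesselCoeff α n * x ^ (2 * n)

/-!
For `0 ≤ α ≤ 1` the Gamma ratio `Γ(2n + 3 - α) / Γ(2n + 2)` is at most `2(n + 1)`, so
`c (n + 1) ≤ c n / (2(n + 1))` and hence `c n ≤ 2⁻ⁿ / n!`: the series for `I₀^α` converges
everywhere, dominated by that of `exp (x² / 2)`. With positive coefficients and only even
powers, `I₀^α` is even and strictly increasing on `[0, ∞)`, with `I₀^α 0 = 1`. So `h` is a
positive multiple of `1 - I₀^α(√a r) / I₀^α(√a)`: strictly decreasing on `[0, 1]`, zero at `1`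
(hence positive at `0`), and even, so `h' 0 = 0`.
-/

open scoped Nat

section Coeff

variable {α : ℝ}

lemma fracBesselCoeff_zero (α : ℝ) : fracBesselCoeff α 0 = 1 := by
  simp [fracBesselCoeff]

lemma fracBesselCoeff_pos (hα : α < 3) (n : ℕ) : 0 < fracBesselCoeff α n := by
  unfold fracBesselCoeff
  refine div_pos (prod_pos fun i _ => div_pos ?_ ?_) (by positivity) <;>
    exact Real.Gamma_pos_of_pos (by linarith [(Nat.cast_nonneg i : (0 : ℝ) ≤ i)])

lemma fracBesselCoeff_succ (α : ℝ) (n : ℕ) :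
    fracBesselCoeff α (n + 1) =
      fracBesselCoeff α n * (Gamma (2 * (n + 1) - α + 1) / Gamma (2 * (n + 1))) /
        (4 * (n + 1) ^ 2) := by
  simp only [fracBesselCoeff, prod_range_succ, Nat.factorial_succ, Nat.cast_mul, Nat.cast_succ]
  field_simp
  ring

lemma Gamma_two_mul_add_two_sub_le (hα₀ : 0 ≤ α) (hα₁ : α ≤ 1) (n : ℕ) :
    Gamma (2 * (n + 1) - α + 1) ≤ 2 * (n + 1) * Gamma (2 * (n + 1)) := by
  have hn : (0 : ℝ) ≤ n := n.cast_nonneg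
  rw [← Real.Gamma_add_one (by positivity)]
  exact Real.Gamma_strictMonoOn_Ici.monotoneOn (by simp; linarith) (by simp; linarith)
    (by linarith)

lemma fracBesselCoeff_succ_le (hα₀ : 0 ≤ α) (hα₁ : α ≤ 1) (n : ℕ) :
    fracBesselCoeff α (n + 1) ≤ fracBesselCoeff α n / (2 * (n + 1)) := by
  have hc := fracBesselCoeff_pos (by linarith) n
  have hΓ : 0 < Gamma (2 * (n + 1)) := Real.Gamma_pos_of_pos (by positivity)
  calc fracBesselCoeff α (n + 1)
      ≤ fracBesselCoeff α n * (2 * (n + 1)) / (4 * (n + 1) ^ 2) := by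
        rw [fracBesselCoeff_succ]
        gcongr
        rw [div_le_iff₀ hΓ]
        exact Gamma_two_mul_add_two_sub_le hα₀ hα₁ n
    _ = fracBesselCoeff α n / (2 * (n + 1)) := by
        field_simp
        ring

lemma fracBesselCoeff_le (hα₀ : 0 ≤ α) (hα₁ : α ≤ 1) (n : ℕ) :
    fracBesselCoeff α n ≤ (1 / 2) ^ n / n ! := by
  induction n with
  | zero => simp [fracBesselCoeff_zero]
  | succ n ih =>
    calc fracBesselCoeff α (n + 1) ≤ fracBesselCoeff α n / (2 * (n + 1)) :=
          fracBesselCoeff_succ_le hα₀ hα₁ n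
      _ ≤ (1 / 2) ^ n / n ! / (2 * (n + 1)) := by gcongr
      _ = (1 / 2) ^ (n + 1) / (n + 1)! := by
        rw [Nat.factorial_succ]; push_cast; field_simp; ring

lemma summable_fracBesselCoeff_mul_pow (hα₀ : 0 ≤ α) (hα₁ : α ≤ 1) (x : ℝ) :
    Summable fun n => fracBesselCoeff α n * x ^ (2 * n) := by
  refine .of_nonneg_of_le
    (fun n => mul_nonneg (fracBesselCoeff_pos (by linarith) n).le ((even_two_mul n).pow_nonneg x))
    (fun n => ?_) (Real.summable_pow_div_factorial (x ^ 2 / 2))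
  calc fracBesselCoeff α n * x ^ (2 * n) ≤ (1 / 2) ^ n / n ! * (x ^ 2) ^ n := by
        rw [pow_mul]
        gcongr
        exact fracBesselCoeff_le hα₀ hα₁ n
    _ = (x ^ 2 / 2) ^ n / n ! := by ring

end Coeff

lemma fracBesselI_zero (α : ℝ) : fracBesselI α 0 = 1 := by
  rw [fracBesselI, tsum_eq_single 0 fun n hn => by simp [hn]]
  simp [fracBesselCoeff_zero]

lemma fracBesselI_even (α : ℝ) : (fracBesselI α).Even := fun x => by
  simp only [fracBesselI, pow_mul, neg_sq]

lemma fracBesselI_strictMonoOn {α : ℝ} (hα₀ : 0 ≤ α) (hα₁ : α ≤ 1) :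
    StrictMonoOn (fracBesselI α) (Set.Ici 0) := by
  intro x (hx : 0 ≤ x) y _ hxy
  refine Summable.tsum_lt_tsum (i := 1) (fun n => ?_) ?_
    (summable_fracBesselCoeff_mul_pow hα₀ hα₁ x) (summable_fracBesselCoeff_mul_pow hα₀ hα₁ y)
  · gcongr
    exact (fracBesselCoeff_pos (by linarith) n).le
  · have := fracBesselCoeff_pos (α := α) (by linarith) 1
    gcongr

lemma Function.Even.deriv_zero {F : Type*} [NormedAddCommGroup F] [NormedSpace ℝ F]
    {f : ℝ → F} (hf : f.Even) : deriv f 0 = 0 := by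
  have : IsAddTorsionFree F := .of_isTorsionFree ℝ F
  have h := deriv_comp_neg f 0
  rw [funext hf, neg_zero] at h
  exact self_eq_neg.1 h

theorem corneal_height_properties (α a b : ℝ) (hα : α ∈ Set.Ioc (0:ℝ) 1)
    (ha : 0 < a) (hb : 0 < b) :
    let h : ℝ → ℝ := fun r =>
      (b / a) * (1 - fracBesselI α (Real.sqrt a * r) / fracBesselI α (Real.sqrt a))
    h 1 = 0 ∧
      (h 0 = (b / a) * (1 - 1 / fracBesselI α (Real.sqrt a)) ∧ 0 < h 0) ∧
      deriv h 0 = 0 ∧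
      StrictAntiOn h (Set.Icc 0 1) := by
  intro h
  have hI := fracBesselI_strictMonoOn hα.1.le hα.2
  have hsa : 0 < √a := Real.sqrt_pos.2 ha
  have hC : 1 < fracBesselI α √a := fracBesselI_zero α ▸ hI Set.self_mem_Ici hsa.le hsa
  have h_one : h 1 = 0 := by simp [h, (zero_lt_one.trans hC).ne']
  have h_anti : StrictAntiOn h (Set.Icc 0 1) := by
    intro r hr s hs hrs
    have := hI (mul_nonneg hsa.le hr.1) (mul_nonneg hsa.le hs.1) (mul_lt_mul_of_pos_left hrs hsa)
    simp only [h]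
    gcongr
  refine ⟨h_one, ⟨by simp [h, fracBesselI_zero], ?_⟩, ?_, h_anti⟩
  · simpa [h_one] using h_anti (Set.left_mem_Icc.2 zero_le_one) (Set.right_mem_Icc.2 zero_le_one)
      zero_lt_one
  · exact Function.Even.deriv_zero fun r => by simp only [h, mul_neg, (fracBesselI_even α).eq]
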